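/- arXiv:2602.09502 — 2 statements merged into one kernel-verified Lean document; each statement's English description precedes it below -/
import Mathlib

section
/- Let d ≥ 1, let K ⊆ [0,1]^d be convex, and let u ∈ K with ν = ‖u‖_∞. Let f : ℝ^d → ℝ be continuous DR-submodular and nonnegative on X = [0,1]^d, differentiable on X with continuous bounded gradient ∇f. Define g : K → ℝ^d by g(x) = ∫_0^1 (1/(8(1 − z/2)^3)) · ∇f((z/2)(x − u) + u) dz (a Bochner integral; note (z/2)(x − u) + u ∈ K by convexity). Then for all x, y ∈ K: ⟨g(x), y − x⟩ ≥ ((1 − ν)/4) · f(y) − f((x + u)/2). -/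
open MeasureTheory Finset Set Filter Topology

noncomputable section
def cube (d : ℕ) : Set (EuclideanSpace ℝ (Fin d)) :=
  {x | ∀ i, x i ∈ Set.Icc (0 : ℝ) 1}
variable {d : ℕ}
local notation "E" => EuclideanSpace ℝ (Fin d)

lemma convex_cube (d : ℕ) : Convex ℝ (cube d) := by
  intro a ha b hb s t hs ht hst i
  have h1 := ha i; have h2 := hb i
  simp only [Set.mem_Icc] at h1 h2 ⊢
  have : (s • a + t • b) i = s * a i + t * b i := by
    simp [PiLp.add_apply, PiLp.smul_apply, smul_eq_mul]
  rw [this]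
  constructor
  · nlinarith [h1.1, h2.1]
  · nlinarith [h1.2, h2.2]

variable {f : EuclideanSpace ℝ (Fin d) → ℝ} {f' : EuclideanSpace ℝ (Fin d) → EuclideanSpace ℝ (Fin d)}

/-- chain rule along a line, within a parameter set -/
lemma comp_line (hgrad : ∀ x ∈ cube d, HasGradientWithinAt f (f' x) (cube d) x)
    {L : ℝ → E} {v : E} {s : Set ℝ} {z : ℝ}
    (hL : HasDerivAt L v z) (hmaps : Set.MapsTo L s (cube d)) (hz : L z ∈ cube d) :
    HasDerivWithinAt (fun t => f (L t)) (inner ℝ (f' (L z)) v : ℝ) s z := by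
  have hf : HasFDerivWithinAt f (InnerProductSpace.toDual ℝ _ (f' (L z))) (cube d) (L z) :=
    hgrad _ hz
  have := hf.comp_hasDerivWithinAt z hL.hasDerivWithinAt hmaps
  simp at this; exact this

/-- slope tendsto along positive direction -/
lemma tendsto_slope_of_grad
    (hgrad : ∀ x ∈ cube d, HasGradientWithinAt f (f' x) (cube d) x)
    {c v : E} (hc : c ∈ cube d) {t0 : ℝ} (ht0 : 0 < t0)
    (hend : c + t0 • v ∈ cube d) :
    Filter.Tendsto (fun t : ℝ => (f (c + t • v) - f c) / t) (nhdsWithin (0:ℝ) (Set.Ioi 0))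
      (nhds (inner ℝ (f' c) v : ℝ)) := by
  have hmaps : Set.MapsTo (fun t : ℝ => c + t • v) (Set.Icc 0 t0) (cube d) := by
    intro t ht
    have key : (1 - t/t0) • c + (t/t0) • (c + t0 • v) = c + t • v := by
      have hts : (t/t0) * t0 = t := div_mul_cancel₀ t ht0.ne'
      rw [smul_add, smul_smul, hts]; module
    show c + t • v ∈ cube d
    rw [← key]
    exact convex_cube d hc hend (sub_nonneg.2 ((div_le_one ht0).2 ht.2)) (div_nonneg ht.1 ht0.le)
      (by field_simp; ring)
  have hder : HasDerivWithinAt (fun t : ℝ => f (c + t • v)) (inner ℝ (f' c) v : ℝ)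
      (Set.Icc 0 t0) 0 := by
    have hL : HasDerivAt (fun t : ℝ => c + t • v) v 0 := by
      simpa using ((hasDerivAt_id (0:ℝ)).smul_const v).const_add c
    have h0 : (fun t : ℝ => c + t • v) 0 ∈ cube d := by simpa using hc
    have := comp_line hgrad hL hmaps h0
    simpa using this
  have h1 := hasDerivWithinAt_iff_tendsto_slope.mp hder
  have h2 : nhdsWithin (0:ℝ) (Set.Ioi 0) ≤ nhdsWithin (0:ℝ) (Set.Icc 0 t0 \ {0}) := by
    rw [← nhdsWithin_Ioc_eq_nhdsGT ht0]
    exact nhdsWithin_mono _ (fun t ht => ⟨⟨le_of_lt ht.1, ht.2⟩, ne_of_gt ht.1⟩)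
  have h3 := h1.mono_left h2
  refine h3.congr (fun t => ?_)
  simp [slope_def_field]

def DRSubmodularOn (d : ℕ) (f : EuclideanSpace ℝ (Fin d) → ℝ) : Prop :=
  ∀ x y : EuclideanSpace ℝ (Fin d), x ∈ cube d → y ∈ cube d → (∀ i, x i ≤ y i) →
    ∀ (j : Fin d) (z : ℝ), 0 ≤ z →
      x + z • EuclideanSpace.single j (1 : ℝ) ∈ cube d →
      y + z • EuclideanSpace.single j (1 : ℝ) ∈ cube d →
      f (y + z • EuclideanSpace.single j (1 : ℝ)) - f y ≤
        f (x + z • EuclideanSpace.single j (1 : ℝ)) - f x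

lemma add_single_mem {a : E} (ha : a ∈ cube d) {j : Fin d} {t : ℝ}
    (h0 : 0 ≤ a j + t) (h1 : a j + t ≤ 1) :
    a + t • EuclideanSpace.single j (1:ℝ) ∈ cube d := by
  intro i
  have hai := ha i
  simp only [Set.mem_Icc] at hai ⊢
  have happ : (a + t • EuclideanSpace.single j (1:ℝ)) i
      = a i + t * (if i = j then (1:ℝ) else 0) := by
    simp [PiLp.add_apply, PiLp.smul_apply, EuclideanSpace.single_apply, smul_eq_mul]
  rw [happ]
  rcases eq_or_ne i j with rfl | hij
  · simpa using ⟨h0, h1⟩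
  · simpa [hij] using hai

lemma inner_single (c : E) (j : Fin d) : (inner ℝ c (EuclideanSpace.single j (1:ℝ)) : ℝ) = c j := by
  simp [EuclideanSpace.inner_single_right]

/-- limit of upward difference quotients equals gradient coordinate -/
lemma tendsto_up (hgrad : ∀ x ∈ cube d, HasGradientWithinAt f (f' x) (cube d) x)
    {c : E} (hc : c ∈ cube d) {j : Fin d} {t0 : ℝ} (ht0 : 0 < t0)
    (hend : c + t0 • EuclideanSpace.single j (1:ℝ) ∈ cube d) :
    Filter.Tendsto (fun t : ℝ => (f (c + t • EuclideanSpace.single j (1:ℝ)) - f c) / t)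
      (nhdsWithin (0:ℝ) (Set.Ioi 0)) (nhds (f' c j)) := by
  have := tendsto_slope_of_grad hgrad hc ht0 hend
  rwa [inner_single] at this

/-- limit of downward difference quotients equals gradient coordinate -/
lemma tendsto_down (hgrad : ∀ x ∈ cube d, HasGradientWithinAt f (f' x) (cube d) x)
    {c : E} (hc : c ∈ cube d) {j : Fin d} {t0 : ℝ} (ht0 : 0 < t0)
    (hend : c + (-t0) • EuclideanSpace.single j (1:ℝ) ∈ cube d) :
    Filter.Tendsto (fun t : ℝ => (f c - f (c + (-t) • EuclideanSpace.single j (1:ℝ))) / t)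
      (nhdsWithin (0:ℝ) (Set.Ioi 0)) (nhds (f' c j)) := by
  have hend' : c + t0 • (-(EuclideanSpace.single j (1:ℝ))) ∈ cube d := by
    rw [smul_neg, ← neg_smul]; exact hend
  have h := tendsto_slope_of_grad hgrad hc ht0 hend'
  have hval : (inner ℝ (f' c) (-(EuclideanSpace.single j (1:ℝ))) : ℝ) = -(f' c j) := by
    rw [inner_neg_right, inner_single]
  rw [hval] at h
  have := h.neg
  rw [neg_neg] at this
  refine this.congr (fun t => ?_)
  rw [smul_neg, ← neg_smul]
  ring

lemma grad_antitone (hsub : DRSubmodularOn d f)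
    (hgrad : ∀ x ∈ cube d, HasGradientWithinAt f (f' x) (cube d) x)
    {a b : E} (ha : a ∈ cube d) (hb : b ∈ cube d)
    (hle : ∀ i, a i ≤ b i) (j : Fin d) : f' b j ≤ f' a j := by
  set e := EuclideanSpace.single j (1:ℝ) with he
  have ha0 := (ha j).1; have ha1 := (ha j).2
  have hb0 := (hb j).1; have hb1 := (hb j).2
  rcases lt_or_eq_of_le hb1 with hbj | hbj
  · -- b j < 1 : move up from both
    set t0 : ℝ := 1 - b j with ht0def
    have ht0 : 0 < t0 := by simp [ht0def]; linarith
    have hbe : b + t0 • e ∈ cube d := add_single_mem hb (by linarith) (by simp [ht0def])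
    have hae : a + t0 • e ∈ cube d := add_single_mem ha (by linarith) (by have := hle j; simp [ht0def]; linarith)
    have hA := tendsto_up hgrad ha ht0 hae
    have hB := tendsto_up hgrad hb ht0 hbe
    refine le_of_tendsto_of_tendsto hB hA ?_
    filter_upwards [Ioc_mem_nhdsGT_of_mem ⟨le_refl (0:ℝ), ht0⟩] with t ht
    have h1 : a + t • e ∈ cube d := add_single_mem ha (by linarith [ht.1]) (by have := hle j; simp only [ht0def] at ht; linarith [ht.2])
    have h2 : b + t • e ∈ cube d := add_single_mem hb (by linarith [ht.1]) (by simp only [ht0def] at ht; linarith [ht.2])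
    have := hsub a b ha hb hle j t ht.1.le h1 h2
    exact div_le_div_of_nonneg_right this ht.1.le
  · rcases lt_or_eq_of_le ha1 with haj | haj
    · -- a j < 1 = b j : up from a, down from b
      set t0 : ℝ := 1 - a j with ht0def
      have ht0 : 0 < t0 := by simp [ht0def]; linarith
      have hae : a + t0 • e ∈ cube d := add_single_mem ha (by linarith) (by simp [ht0def])
      have hbe : b + (-t0) • e ∈ cube d := add_single_mem hb (by simp [ht0def]; linarith) (by linarith)
      have hA := tendsto_up hgrad ha ht0 hae
      have hB := tendsto_down hgrad hb ht0 hbe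
      refine le_of_tendsto_of_tendsto hB hA ?_
      filter_upwards [Ioc_mem_nhdsGT_of_mem ⟨le_refl (0:ℝ), ht0⟩] with t ht
      have ht1 : t ≤ 1 - a j := by simpa [ht0def] using ht.2
      have h1 : a + t • e ∈ cube d := add_single_mem ha (by linarith [ht.1]) (by linarith)
      have h2 : b + (-t) • e ∈ cube d := add_single_mem hb (by simp; linarith [ht1, ha0]) (by linarith [ht.1])
      have hle' : ∀ i, a i ≤ (b + (-t) • e) i := by
        intro i
        have happ : (b + (-t) • e) i = b i + (-t) * (if i = j then (1:ℝ) else 0) := by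
          simp [he, PiLp.add_apply, PiLp.smul_apply, EuclideanSpace.single_apply, smul_eq_mul]
          split_ifs <;> ring
        rw [happ]
        rcases eq_or_ne i j with rfl | hij
        · simp; linarith
        · simpa [hij] using hle i
      have hxz : a + t • e ∈ cube d := h1
      have hyz : (b + (-t) • e) + t • e ∈ cube d := by
        have : (b + (-t) • e) + t • e = b := by module
        rw [this]; exact hb
      have hDR := hsub a (b + (-t) • e) ha h2 hle' j t ht.1.le hxz hyz
      have hbb : (b + (-t) • e) + t • e = b := by module
      rw [hbb] at hDR
      exact div_le_div_of_nonneg_right hDR ht.1.le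
    · -- a j = 1 = b j : down from both
      have ht0 : (0:ℝ) < 1 := one_pos
      have hae : a + (-(1:ℝ)) • e ∈ cube d := add_single_mem ha (by linarith) (by linarith)
      have hbe : b + (-(1:ℝ)) • e ∈ cube d := add_single_mem hb (by linarith) (by linarith)
      have hA := tendsto_down hgrad ha ht0 hae
      have hB := tendsto_down hgrad hb ht0 hbe
      refine le_of_tendsto_of_tendsto hB hA ?_
      filter_upwards [Ioc_mem_nhdsGT_of_mem ⟨le_refl (0:ℝ), one_pos⟩] with t ht
      have h1 : a + (-t) • e ∈ cube d := add_single_mem ha (by simp; linarith [ht.2]) (by linarith [ht.1, ht.2])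
      have h2 : b + (-t) • e ∈ cube d := add_single_mem hb (by simp; linarith [ht.2]) (by linarith [ht.1, ht.2])
      have hle' : ∀ i, (a + (-t) • e) i ≤ (b + (-t) • e) i := by
        intro i
        have h3 : (a + (-t) • e) i = a i + (-t) * (if i = j then (1:ℝ) else 0) := by
          simp [he, PiLp.add_apply, PiLp.smul_apply, EuclideanSpace.single_apply, smul_eq_mul]
          split_ifs <;> ring
        have h4 : (b + (-t) • e) i = b i + (-t) * (if i = j then (1:ℝ) else 0) := by
          simp [he, PiLp.add_apply, PiLp.smul_apply, EuclideanSpace.single_apply, smul_eq_mul]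
          split_ifs <;> ring
        rw [h3, h4]
        have := hle i; linarith
      have hxz : (a + (-t) • e) + t • e ∈ cube d := by
        have : (a + (-t) • e) + t • e = a := by module
        rw [this]; exact ha
      have hyz : (b + (-t) • e) + t • e ∈ cube d := by
        have : (b + (-t) • e) + t • e = b := by module
        rw [this]; exact hb
      have hDR := hsub (a + (-t) • e) (b + (-t) • e) h1 h2 hle' j t ht.1.le hxz hyz
      have hbb : (b + (-t) • e) + t • e = b := by module
      have haa : (a + (-t) • e) + t • e = a := by module
      rw [hbb, haa] at hDR
      exact div_le_div_of_nonneg_right (by linarith) ht.1.le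

def vsup (a b : EuclideanSpace ℝ (Fin d)) : EuclideanSpace ℝ (Fin d) :=
  (WithLp.equiv 2 (Fin d → ℝ)).symm (fun i => max (a i) (b i))
def vinf (a b : EuclideanSpace ℝ (Fin d)) : EuclideanSpace ℝ (Fin d) :=
  (WithLp.equiv 2 (Fin d → ℝ)).symm (fun i => min (a i) (b i))
@[simp] lemma vsup_apply (a b : E) (i : Fin d) : vsup a b i = max (a i) (b i) := rfl
@[simp] lemma vinf_apply (a b : E) (i : Fin d) : vinf a b i = min (a i) (b i) := rfl
lemma euclid_ext {a b : E} (h : ∀ i, a i = b i) : a = b := PiLp.ext h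
lemma real_inner_euclid (a b : E) : (inner ℝ a b : ℝ) = ∑ i, a i * b i := by
  simp [PiLp.inner_apply, RCLike.inner_apply, conj_trivial, mul_comm]

lemma inner_grad_mono (hsub : DRSubmodularOn d f)
    (hgrad : ∀ x ∈ cube d, HasGradientWithinAt f (f' x) (cube d) x)
    {a b v : E} (ha : a ∈ cube d) (hb : b ∈ cube d)
    (hle : ∀ i, a i ≤ b i) (hv : ∀ i, 0 ≤ v i) :
    (inner ℝ (f' b) v : ℝ) ≤ inner ℝ (f' a) v := by
  rw [real_inner_euclid, real_inner_euclid]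
  exact Finset.sum_le_sum fun i _ =>
    mul_le_mul_of_nonneg_right (grad_antitone hsub hgrad ha hb hle i) (hv i)

lemma inner_grad_mono' (hsub : DRSubmodularOn d f)
    (hgrad : ∀ x ∈ cube d, HasGradientWithinAt f (f' x) (cube d) x)
    {a b v : E} (ha : a ∈ cube d) (hb : b ∈ cube d)
    (hle : ∀ i, a i ≤ b i) (hv : ∀ i, v i ≤ 0) :
    (inner ℝ (f' a) v : ℝ) ≤ inner ℝ (f' b) v := by
  have := inner_grad_mono hsub hgrad ha hb hle (v := -v) (fun i => by
    have := hv i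
    have : (-v) i = -(v i) := rfl
    simp [this]; linarith [hv i])
  rw [inner_neg_right, inner_neg_right] at this
  linarith

/-- derivative of `t ↦ f (a + t • v)` within `Icc 0 s` -/
lemma line_hasDeriv (hgrad : ∀ x ∈ cube d, HasGradientWithinAt f (f' x) (cube d) x)
    {a v : E} {s : ℝ} (hs : 0 < s) (ha : a ∈ cube d) (hend : a + s • v ∈ cube d)
    {t : ℝ} (ht : t ∈ Set.Icc 0 s) :
    HasDerivWithinAt (fun t : ℝ => f (a + t • v)) (inner ℝ (f' (a + t • v)) v : ℝ)
      (Set.Icc 0 s) t := by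
  have hmaps : Set.MapsTo (fun t : ℝ => a + t • v) (Set.Icc 0 s) (cube d) := by
    intro r hr
    have key : (1 - r/s) • a + (r/s) • (a + s • v) = a + r • v := by
      have hts : (r/s) * s = r := div_mul_cancel₀ r hs.ne'
      rw [smul_add, smul_smul, hts]; module
    show a + r • v ∈ cube d
    rw [← key]
    exact convex_cube d ha hend (sub_nonneg.2 ((div_le_one hs).2 hr.2)) (div_nonneg hr.1 hs.le)
      (by field_simp; ring)
  have hL : HasDerivAt (fun t : ℝ => a + t • v) v t := by
    simpa using ((hasDerivAt_id t).smul_const v).const_add a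
  exact comp_line hgrad hL hmaps (hmaps ht)

/-- first-order concavity bound along a sign-constant direction -/
lemma first_order (hsub : DRSubmodularOn d f)
    (hgrad : ∀ x ∈ cube d, HasGradientWithinAt f (f' x) (cube d) x)
    {a v : E} (ha : a ∈ cube d) (hend : a + v ∈ cube d)
    (hv : (∀ i, 0 ≤ v i) ∨ (∀ i, v i ≤ 0)) :
    f (a + v) ≤ f a + (inner ℝ (f' a) v : ℝ) := by
  set C : ℝ := inner ℝ (f' a) v with hC
  set ψ : ℝ → ℝ := fun t => f (a + t • v) - t * C with hψ
  have hder : ∀ t ∈ Set.Icc (0:ℝ) 1,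
      HasDerivWithinAt ψ ((inner ℝ (f' (a + t • v)) v : ℝ) - C) (Set.Icc 0 1) t := by
    intro t ht
    have h1 := line_hasDeriv hgrad one_pos ha (by simpa using hend) ht
    exact h1.sub ((hasDerivAt_mul_const C).hasDerivWithinAt)
  have hmemt : ∀ t ∈ Set.Icc (0:ℝ) 1, a + t • v ∈ cube d := by
    intro t ht
    have key : (1 - t) • a + t • (a + v) = a + t • v := by module
    rw [← key]
    exact convex_cube d ha hend (by linarith [ht.2]) ht.1 (by ring)
  have hanti : AntitoneOn ψ (Set.Icc 0 1) := by
    apply antitoneOn_of_deriv_nonpos (convex_Icc 0 1)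
    · exact fun t ht => (hder t ht).continuousWithinAt
    · intro t ht
      rw [interior_Icc] at ht
      exact ((hder t (Set.mem_Icc_of_Ioo ht)).hasDerivAt
        (Icc_mem_nhds ht.1 ht.2)).differentiableAt.differentiableWithinAt
    · intro t ht
      rw [interior_Icc] at ht
      have hd := (hder t (Set.mem_Icc_of_Ioo ht)).hasDerivAt (Icc_mem_nhds ht.1 ht.2)
      rw [hd.deriv]
      have hmem := hmemt t (Set.mem_Icc_of_Ioo ht)
      rcases hv with hv | hv
      · have hle : ∀ i, a i ≤ (a + t • v) i := by
          intro i
          have : (a + t • v) i = a i + t * v i := by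
            simp [PiLp.add_apply, PiLp.smul_apply, smul_eq_mul]
          rw [this]
          nlinarith [hv i, ht.1.le]
        have := inner_grad_mono hsub hgrad ha hmem hle hv
        simp only [hC]; linarith
      · have hle : ∀ i, (a + t • v) i ≤ a i := by
          intro i
          have : (a + t • v) i = a i + t * v i := by
            simp [PiLp.add_apply, PiLp.smul_apply, smul_eq_mul]
          rw [this]
          nlinarith [hv i, ht.1.le]
        have := inner_grad_mono' hsub hgrad hmem ha hle hv
        simp only [hC]; linarith
  have := hanti (Set.left_mem_Icc.2 zero_le_one) (Set.right_mem_Icc.2 zero_le_one) zero_le_one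
  simp only [hψ, zero_smul, add_zero, zero_mul, sub_zero, one_smul, one_mul] at this
  linarith

/-- concavity of `f` along a nonnegative direction -/
lemma concave_along (hsub : DRSubmodularOn d f)
    (hgrad : ∀ x ∈ cube d, HasGradientWithinAt f (f' x) (cube d) x)
    {a v : E} {s : ℝ} (hs : 0 < s) (ha : a ∈ cube d) (hend : a + s • v ∈ cube d)
    (hv : ∀ i, 0 ≤ v i) :
    ConcaveOn ℝ (Set.Icc 0 s) (fun t : ℝ => f (a + t • v)) := by
  have hmemt : ∀ t ∈ Set.Icc (0:ℝ) s, a + t • v ∈ cube d := by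
    intro t ht
    have key : (1 - t/s) • a + (t/s) • (a + s • v) = a + t • v := by
      have hts : (t/s) * s = t := div_mul_cancel₀ t hs.ne'
      rw [smul_add, smul_smul, hts]; module
    rw [← key]
    exact convex_cube d ha hend (sub_nonneg.2 ((div_le_one hs).2 ht.2)) (div_nonneg ht.1 hs.le)
      (by field_simp; ring)
  apply AntitoneOn.concaveOn_of_deriv (convex_Icc 0 s)
  · exact fun t ht => (line_hasDeriv hgrad hs ha hend ht).continuousWithinAt
  · intro t ht
    rw [interior_Icc] at ht
    exact ((line_hasDeriv hgrad hs ha hend (Set.mem_Icc_of_Ioo ht)).hasDerivAt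
      (Icc_mem_nhds ht.1 ht.2)).differentiableAt.differentiableWithinAt
  · intro t1 ht1 t2 ht2 h12
    rw [interior_Icc] at ht1 ht2
    have hd1 := ((line_hasDeriv hgrad hs ha hend (Set.mem_Icc_of_Ioo ht1)).hasDerivAt
      (Icc_mem_nhds ht1.1 ht1.2)).deriv
    have hd2 := ((line_hasDeriv hgrad hs ha hend (Set.mem_Icc_of_Ioo ht2)).hasDerivAt
      (Icc_mem_nhds ht2.1 ht2.2)).deriv
    rw [hd1, hd2]
    have hle : ∀ i, (a + t1 • v) i ≤ (a + t2 • v) i := by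
      intro i
      have e1 : (a + t1 • v) i = a i + t1 * v i := by
        simp [PiLp.add_apply, PiLp.smul_apply, smul_eq_mul]
      have e2 : (a + t2 • v) i = a i + t2 * v i := by
        simp [PiLp.add_apply, PiLp.smul_apply, smul_eq_mul]
      rw [e1, e2]
      nlinarith [hv i]
    exact inner_grad_mono hsub hgrad (hmemt t1 (Set.mem_Icc_of_Ioo ht1))
      (hmemt t2 (Set.mem_Icc_of_Ioo ht2)) hle hv

/-- `f (a ⊔ y) ≥ (1-m) f y` when all coordinates of `a` are at most `m`. -/
lemma sup_lower (hsub : DRSubmodularOn d f)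
    (hgrad : ∀ x ∈ cube d, HasGradientWithinAt f (f' x) (cube d) x)
    (hnonneg : ∀ x ∈ cube d, 0 ≤ f x)
    {a y : E} (ha : a ∈ cube d) (hy : y ∈ cube d)
    {m : ℝ} (hm0 : 0 ≤ m) (hm1 : m ≤ 1) (ham : ∀ i, a i ≤ m) :
    (1 - m) * f y ≤ f (vsup a y) := by
  rcases eq_or_lt_of_le hm0 with hm | hm
  · -- m = 0 : a = 0, sup = y
    have hay : vsup a y = y := by
      apply euclid_ext; intro i
      have h1 := (ha i).1
      have h2 := ham i
      simp only [vsup_apply]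
      have : a i = 0 := le_antisymm (by rw [← hm] at h2; exact h2) h1
      rw [this]
      exact max_eq_right (hy i).1
    rw [hay, ← hm]
    simp
  · set v : E := vsup a y - y with hvdef
    have hv : ∀ i, 0 ≤ v i := by
      intro i
      have : v i = max (a i) (y i) - y i := by simp [hvdef, PiLp.sub_apply]
      rw [this]
      simp [le_max_iff]
    have hvle : ∀ i, v i ≤ m * (1 - y i) := by
      intro i
      have hvi : v i = max (a i) (y i) - y i := by simp [hvdef, PiLp.sub_apply]
      rw [hvi]
      rcases max_cases (a i) (y i) with ⟨h, _⟩ | ⟨h, _⟩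
      · rw [h]; nlinarith [ham i, (hy i).2, (hy i).1]
      · rw [h]; nlinarith [(hy i).2, hm.le]
    have hsum : y + v = vsup a y := by
      apply euclid_ext; intro i
      have : (y + v) i = y i + v i := by simp [PiLp.add_apply]
      rw [this]
      have : v i = max (a i) (y i) - y i := by simp [hvdef, PiLp.sub_apply]
      rw [this, vsup_apply]; ring
    have hend : y + (1/m) • v ∈ cube d := by
      intro i
      have happ : (y + (1/m) • v) i = y i + (1/m) * v i := by
        simp [PiLp.add_apply, PiLp.smul_apply, smul_eq_mul]
      rw [happ, Set.mem_Icc]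
      constructor
      · have h1 := hv i
        have h2 := (hy i).1
        have : 0 ≤ (1/m) * v i := by positivity
        linarith
      · have h1 := hvle i
        have h2 : (1/m) * v i ≤ 1 - y i := by
          rw [div_mul_eq_mul_div, one_mul, div_le_iff₀ hm]
          nlinarith
        linarith
    have hcon := concave_along hsub hgrad (s := 1/m) (by positivity) hy hend hv
    have hmem1 : (1/m : ℝ) ∈ Set.Icc (0:ℝ) (1/m) := Set.right_mem_Icc.2 (by positivity)
    have hmem0 : (0:ℝ) ∈ Set.Icc (0:ℝ) (1/m) := Set.left_mem_Icc.2 (by positivity)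
    have key := hcon.2 hmem1 hmem0 hm0 (by linarith : (0:ℝ) ≤ 1 - m) (by ring)
    have hone : m • (1/m : ℝ) + (1 - m) • (0:ℝ) = 1 := by
      rw [smul_eq_mul, smul_eq_mul, mul_zero, add_zero, mul_one_div_cancel hm.ne']
    rw [hone] at key
    simp only [smul_eq_mul, mul_zero] at key
    have hφ0 : f (y + (0:ℝ) • v) = f y := by simp
    have hφ1 : f (y + (1:ℝ) • v) = f (vsup a y) := by rw [one_smul, hsum]
    have hnn : 0 ≤ f (y + (1/m) • v) := hnonneg _ hend
    rw [hφ0, hφ1] at key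
    nlinarith

/-- gradient inequality: `f(a ⊔ b) + f(a ⊓ b) ≤ 2 f a + ⟨∇f a, b - a⟩` -/
lemma grad_sup_inf (hsub : DRSubmodularOn d f)
    (hgrad : ∀ x ∈ cube d, HasGradientWithinAt f (f' x) (cube d) x)
    {a b : E} (ha : a ∈ cube d) (hb : b ∈ cube d) :
    f (vsup a b) + f (vinf a b) ≤ 2 * f a + (inner ℝ (f' a) (b - a) : ℝ) := by
  set v1 : E := vsup a b - a with hv1
  set v2 : E := vinf a b - a with hv2
  have hv1app : ∀ i, v1 i = max (a i) (b i) - a i := fun i => by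
    simp [hv1, PiLp.sub_apply]
  have hv2app : ∀ i, v2 i = min (a i) (b i) - a i := fun i => by
    simp [hv2, PiLp.sub_apply]
  have hv1pos : ∀ i, 0 ≤ v1 i := fun i => by rw [hv1app]; simp [le_max_iff]
  have hv2neg : ∀ i, v2 i ≤ 0 := fun i => by rw [hv2app]; simp [min_le_iff]
  have hsup_mem : vsup a b ∈ cube d := by
    intro i
    simp only [vsup_apply, Set.mem_Icc]
    exact ⟨le_max_of_le_left (ha i).1, max_le (ha i).2 (hb i).2⟩
  have hinf_mem : vinf a b ∈ cube d := by
    intro i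
    simp only [vinf_apply, Set.mem_Icc]
    exact ⟨le_min (ha i).1 (hb i).1, min_le_of_left_le (ha i).2⟩
  have he1 : a + v1 = vsup a b := by
    apply euclid_ext; intro i
    have : (a + v1) i = a i + v1 i := by simp [PiLp.add_apply]
    rw [this, hv1app, vsup_apply]; ring
  have he2 : a + v2 = vinf a b := by
    apply euclid_ext; intro i
    have : (a + v2) i = a i + v2 i := by simp [PiLp.add_apply]
    rw [this, hv2app, vinf_apply]; ring
  have h1 := first_order hsub hgrad ha (by rw [he1]; exact hsup_mem) (Or.inl hv1pos)
  have h2 := first_order hsub hgrad ha (by rw [he2]; exact hinf_mem) (Or.inr hv2neg)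
  rw [he1] at h1; rw [he2] at h2
  have hvsum : v1 + v2 = b - a := by
    apply euclid_ext; intro i
    have e0 : (v1 + v2) i = v1 i + v2 i := by simp [PiLp.add_apply]
    have e1 : (b - a) i = b i - a i := by simp [PiLp.sub_apply]
    rw [e0, e1, hv1app, hv2app]
    have := max_add_min (a i) (b i)
    linarith
  have hinner : (inner ℝ (f' a) v1 : ℝ) + (inner ℝ (f' a) v2 : ℝ) = inner ℝ (f' a) (b - a) := by
    rw [← inner_add_right, hvsum]
  linarith

lemma vsup_mem_cube {a b : E} (ha : a ∈ cube d) (hb : b ∈ cube d) : vsup a b ∈ cube d := by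
  intro i
  simp only [vsup_apply, Set.mem_Icc]
  exact ⟨le_max_of_le_left (ha i).1, max_le (ha i).2 (hb i).2⟩

lemma vinf_mem_cube {a b : E} (ha : a ∈ cube d) (hb : b ∈ cube d) : vinf a b ∈ cube d := by
  intro i
  simp only [vinf_apply, Set.mem_Icc]
  exact ⟨le_min (ha i).1 (hb i).1, min_le_of_left_le (ha i).2⟩
set_option maxHeartbeats 3000000 in
/-- Lemma 1 / Corollary 16 of Zhang et al.: the boosting auxiliary
gradient `g x = ∫_0^1 (1/(8(1-z/2)^3)) ∇f((z/2)(x-u)+u) dz` satisfies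
`⟨g x, y - x⟩ ≥ ((1-ν)/4) f y - f((x+u)/2)` for all `x, y ∈ K`, where `ν = ‖u‖_∞`. -/
theorem boosting_nonmonotone
    (d : ℕ) (hd : 1 ≤ d)
    (K : Set (EuclideanSpace ℝ (Fin d))) (hKcvx : Convex ℝ K) (hKX : K ⊆ cube d)
    (u : EuclideanSpace ℝ (Fin d)) (hu : u ∈ K)
    (ν : ℝ) (hν : ν = ⨆ i, |u i|)
    (f : EuclideanSpace ℝ (Fin d) → ℝ)
    (f' : EuclideanSpace ℝ (Fin d) → EuclideanSpace ℝ (Fin d))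
    (hsub : DRSubmodularOn d f)
    (hnonneg : ∀ x ∈ cube d, 0 ≤ f x)
    (hgrad : ∀ x ∈ cube d, HasGradientWithinAt f (f' x) (cube d) x)
    (hcont : ContinuousOn f' (cube d))
    (hbdd : ∃ G : ℝ, ∀ x ∈ cube d, ‖f' x‖ ≤ G)
    (g : EuclideanSpace ℝ (Fin d) → EuclideanSpace ℝ (Fin d))
    (hg : ∀ x ∈ K, g x =
      ∫ z in (0:ℝ)..1, (1 / (8 * (1 - z / 2) ^ 3)) • f' ((z / 2) • (x - u) + u)) :
    ∀ x ∈ K, ∀ y ∈ K,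
      ((1 - ν) / 4) * f y - f ((2:ℝ)⁻¹ • (x + u)) ≤ (inner ℝ (g x) (y - x) : ℝ) := by
  intro x hx y hy
  classical
  haveI : Nonempty (Fin d) := ⟨⟨0, hd⟩⟩
  -- the path w z
  set w : ℝ → EuclideanSpace ℝ (Fin d) := fun z => (z / 2) • (x - u) + u with hw
  have hwK : ∀ z ∈ Set.Icc (0:ℝ) 1, w z ∈ K := by
    intro z hz
    have key : (z/2) • x + (1 - z/2) • u = w z := by rw [hw]; module
    rw [← key]
    exact hKcvx hx hu (by linarith [hz.1]) (by linarith [hz.2]) (by ring)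
  have hwmaps : Set.MapsTo w (Set.Icc (0:ℝ) 1) (cube d) := fun z hz => hKX (hwK z hz)
  have hwcont : Continuous w := by
    rw [hw]
    exact ((continuous_id.div_const 2).smul continuous_const).add continuous_const
  -- facts about ν
  have hνle : ∀ i, |u i| ≤ ν := by
    rw [hν]
    exact fun i => le_ciSup (f := fun i => |u i|) (Set.Finite.bddAbove (Set.finite_range _)) i
  have hν0 : 0 ≤ ν := le_trans (abs_nonneg _) (hνle ⟨0, hd⟩)
  have hν1 : ν ≤ 1 := by
    rw [hν]
    exact ciSup_le fun i => abs_le.2 ⟨by linarith [((hKX hu) i).1], ((hKX hu) i).2⟩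
  -- scalar functions
  set F : ℝ → ℝ := fun z => f (w z) with hF
  set D : ℝ → ℝ := fun z => (inner ℝ (f' (w z)) (x - u) : ℝ) with hD
  set A : ℝ → ℝ := fun z => F z * ((2 - z)^2)⁻¹ with hA
  set φA : ℝ → ℝ := fun z => D z / 2 * ((2 - z)^2)⁻¹ + F z * (2 * ((2 - z)^3)⁻¹) with hφA
  set φB : ℝ → ℝ := fun z => (2 * (2 - z)^2)⁻¹ with hφB
  have hfc : ContinuousOn f (cube d) := by
    intro c hc
    have h : HasFDerivWithinAt f (InnerProductSpace.toDual ℝ _ (f' c)) (cube d) c := hgrad c hc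
    exact h.continuousWithinAt
  have hFcont : ContinuousOn F (Set.Icc 0 1) := hfc.comp hwcont.continuousOn hwmaps
  have hDcont : ContinuousOn D (Set.Icc 0 1) :=
    (hcont.comp hwcont.continuousOn hwmaps).inner continuousOn_const
  have hne : ∀ z ∈ Set.Icc (0:ℝ) 1, (2:ℝ) - z ≠ 0 := fun z hz => by
    have := hz.2; intro h; nlinarith
  -- derivative of w
  have hwderiv : ∀ z : ℝ, HasDerivAt w ((2:ℝ)⁻¹ • (x - u)) z := by
    intro z
    rw [hw]
    have h1 : HasDerivAt (fun z : ℝ => z / 2) ((2:ℝ)⁻¹) z := by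
      simpa using (hasDerivAt_id z).div_const 2
    exact (h1.smul_const (x - u)).add_const u
  have hFderiv : ∀ z ∈ Set.Icc (0:ℝ) 1, HasDerivWithinAt F (D z / 2) (Set.Icc 0 1) z := by
    intro z hz
    have h := comp_line hgrad (hwderiv z) hwmaps (hwmaps hz)
    have hval : (inner ℝ (f' (w z)) ((2:ℝ)⁻¹ • (x - u)) : ℝ) = D z / 2 := by
      rw [real_inner_smul_right, hD]; ring
    rwa [hval] at h
  -- derivative of the weight functions
  have hqderiv : ∀ z ∈ Set.Icc (0:ℝ) 1,
      HasDerivAt (fun z : ℝ => (((2:ℝ) - z)^2)⁻¹) (2 * ((2 - z)^3)⁻¹) z := by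
    intro z hz
    have h1 : HasDerivAt (fun z : ℝ => (2:ℝ) - z) (-1) z := (hasDerivAt_id z).const_sub 2
    have h2 := h1.pow 2
    have h3 := h2.inv (pow_ne_zero 2 (hne z hz))
    convert h3 using 1
    · rfl
    · rfl
    · rfl
    have h4 := hne z hz
    simp only [Pi.pow_apply]
    push_cast
    field_simp
  have hAderiv : ∀ z ∈ Set.Icc (0:ℝ) 1, HasDerivWithinAt A (φA z) (Set.Icc 0 1) z := by
    intro z hz
    exact (hFderiv z hz).mul ((hqderiv z hz).hasDerivWithinAt)
  have hBderiv : ∀ z ∈ Set.Icc (0:ℝ) 1,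
      HasDerivAt (fun z : ℝ => ((2:ℝ) * (2 - z))⁻¹) (φB z) z := by
    intro z hz
    have h1 : HasDerivAt (fun z : ℝ => (2:ℝ) * (2 - z)) (-2) z := by
      simpa using ((hasDerivAt_id z).const_sub 2).const_mul (2:ℝ)
    have h2 := h1.inv (by have := hne z hz; intro h; apply this; linarith)
    convert h2 using 1
    · rfl
    · rfl
    · rfl
    rw [hφB]
    field_simp [hne z hz]
  -- continuity of weights
  have hqcont : ContinuousOn (fun z : ℝ => (((2:ℝ) - z)^2)⁻¹) (Set.Icc 0 1) :=
    (((continuous_const.sub continuous_id).pow 2).continuousOn).inv₀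
      (fun z hz => pow_ne_zero 2 (hne z hz))
  have hq3cont : ContinuousOn (fun z : ℝ => (((2:ℝ) - z)^3)⁻¹) (Set.Icc 0 1) :=
    (((continuous_const.sub continuous_id).pow 3).continuousOn).inv₀
      (fun z hz => pow_ne_zero 3 (hne z hz))
  have hφAcont : ContinuousOn φA (Set.Icc 0 1) := by
    apply ContinuousOn.add
    · exact (hDcont.div_const 2).mul hqcont
    · exact hFcont.mul (continuousOn_const.mul hq3cont)
  have hφBcont : ContinuousOn φB (Set.Icc 0 1) := by
    apply ContinuousOn.inv₀
    · exact (continuous_const.mul ((continuous_const.sub continuous_id).pow 2)).continuousOn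
    · intro z hz
      have := hne z hz
      intro h
      apply this
      nlinarith [sq_nonneg ((2:ℝ) - z)]
  have hAcont : ContinuousOn A (Set.Icc 0 1) := hFcont.mul hqcont
  have hφAint : IntervalIntegrable φA MeasureTheory.volume 0 1 := by
    apply ContinuousOn.intervalIntegrable
    rwa [Set.uIcc_of_le zero_le_one]
  have hφBint : IntervalIntegrable φB MeasureTheory.volume 0 1 := by
    apply ContinuousOn.intervalIntegrable
    rwa [Set.uIcc_of_le zero_le_one]
  -- FTC computations
  have hFTCA : ∫ z in (0:ℝ)..1, φA z = A 1 - A 0 := by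
    apply intervalIntegral.integral_eq_sub_of_hasDeriv_right_of_le zero_le_one hAcont
      (fun t ht => ((hAderiv t (Set.mem_Icc_of_Ioo ht)).hasDerivAt
        (Icc_mem_nhds ht.1 ht.2)).hasDerivWithinAt) hφAint
  have hFTCB : ∫ z in (0:ℝ)..1, φB z = (1:ℝ)/4 := by
    have h := intervalIntegral.integral_eq_sub_of_hasDerivAt
      (f := fun z : ℝ => ((2:ℝ) * (2 - z))⁻¹) (f' := φB)
      (fun t ht => hBderiv t (by rwa [Set.uIcc_of_le zero_le_one] at ht)) hφBint
    rw [h]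
    norm_num
  -- the vector integrand
  set I0 : ℝ → EuclideanSpace ℝ (Fin d) :=
    fun z => (1 / (8 * (1 - z / 2) ^ 3)) • f' (w z) with hI0
  have hcne : ∀ z ∈ Set.Icc (0:ℝ) 1, (8:ℝ) * (1 - z/2)^3 ≠ 0 := by
    intro z hz
    have h1 : (1:ℝ)/2 ≤ 1 - z/2 := by linarith [hz.2]
    intro h
    nlinarith [pow_pos (show (0:ℝ) < 1 - z/2 by linarith) 3]
  have hccont : ContinuousOn (fun z : ℝ => 1 / (8 * (1 - z/2)^3)) (Set.Icc 0 1) := by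
    apply ContinuousOn.div continuousOn_const
    · exact (continuous_const.mul ((continuous_const.sub (continuous_id.div_const 2)).pow 3)).continuousOn
    · exact hcne
  have hI0cont : ContinuousOn I0 (Set.Icc 0 1) :=
    hccont.smul (hcont.comp hwcont.continuousOn hwmaps)
  have hI0int : IntervalIntegrable I0 MeasureTheory.volume 0 1 := by
    apply ContinuousOn.intervalIntegrable
    rwa [Set.uIcc_of_le zero_le_one]
  have hgx : g x = ∫ z in (0:ℝ)..1, I0 z := hg x hx
  -- the scalar integrand on the right
  set R : ℝ → ℝ := fun z => (1 / (8 * (1 - z/2)^3)) * (inner ℝ (f' (w z)) (y - x) : ℝ) with hR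
  have hRcont : ContinuousOn R (Set.Icc 0 1) :=
    hccont.mul ((hcont.comp hwcont.continuousOn hwmaps).inner continuousOn_const)
  have hRint : IntervalIntegrable R MeasureTheory.volume 0 1 := by
    apply ContinuousOn.intervalIntegrable
    rwa [Set.uIcc_of_le zero_le_one]
  have hinner : (inner ℝ (g x) (y - x) : ℝ) = ∫ z in (0:ℝ)..1, R z := by
    have hcc := ContinuousLinearMap.intervalIntegral_comp_comm (innerSL ℝ (y - x)) hI0int
    simp only [innerSL_apply_apply] at hcc
    rw [real_inner_comm, hgx, ← hcc]
    apply intervalIntegral.integral_congr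
    intro z hz
    simp only [hI0, hR, innerSL_apply_apply]
    rw [real_inner_smul_right, real_inner_comm]
  -- pointwise inequality
  have hpt : ∀ z ∈ Set.Icc (0:ℝ) 1, (1 - ν) * f y * φB z - φA z ≤ R z := by
    intro z hz
    obtain ⟨hz0, hz1⟩ := hz
    have hwz : w z ∈ cube d := hwmaps ⟨hz0, hz1⟩
    have hyc : y ∈ cube d := hKX hy
    have h5 := grad_sup_inf hsub hgrad hwz hyc
    have ham : ∀ i, (w z) i ≤ z/2 + (1 - z/2) * ν := by
      intro i
      have happ : (w z) i = (z/2) * (x i - u i) + u i := by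
        rw [hw]; simp [PiLp.add_apply, PiLp.smul_apply, PiLp.sub_apply, smul_eq_mul]
      rw [happ]
      have h1 := ((hKX hx) i).2
      have h2 : u i ≤ ν := le_trans (le_abs_self _) (hνle i)
      nlinarith [((hKX hx) i).1, ((hKX hu) i).1]
    have hm0 : 0 ≤ z/2 + (1 - z/2) * ν := by
      have h7 : 0 ≤ (1 - z/2) * ν := mul_nonneg (by linarith) hν0
      linarith
    have hm1 : z/2 + (1 - z/2) * ν ≤ 1 := by
      have h7 : (1 - z/2) * ν ≤ (1 - z/2) * 1 := mul_le_mul_of_nonneg_left hν1 (by linarith)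
      linarith
    have h6 := sup_lower hsub hgrad hnonneg hwz hyc hm0 hm1 ham
    have hinf0 : 0 ≤ f (vinf (w z) y) := hnonneg _ (vinf_mem_cube hwz hyc)
    have hyx : (inner ℝ (f' (w z)) (y - x) : ℝ)
        = (inner ℝ (f' (w z)) (y - w z) : ℝ) - ((2 - z)/2) * D z := by
      have hdecomp : y - x = (y - w z) - ((2 - z)/2) • (x - u) := by
        rw [hw]; module
      rw [hdecomp, inner_sub_right, real_inner_smul_right, hD]
    have hS : (1 - (z/2 + (1 - z/2) * ν)) * f y - 2 * F z
        ≤ (inner ℝ (f' (w z)) (y - w z) : ℝ) := by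
      simp only [hF]
      linarith
    have hc3 : (1:ℝ) / (8 * (1 - z/2)^3) = (((2:ℝ) - z)^3)⁻¹ := by
      rw [show (8:ℝ) * (1 - z/2)^3 = (2 - z)^3 by ring, one_div]
    have hp0 : (0:ℝ) < 2 - z := by linarith
    have hEq : (1 - ν) * f y * φB z - φA z
        = (((2:ℝ) - z)^3)⁻¹ * (((1 - (z/2 + (1 - z/2) * ν)) * f y - 2 * F z)
            - ((2 - z)/2) * D z) := by
      simp only [hφB, hφA]
      field_simp
      ring
    rw [hR]
    simp only []
    rw [hc3, hyx, hEq]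
    apply mul_le_mul_of_nonneg_left _ (by positivity)
    linarith
  -- integrate the pointwise inequality
  have hLint : IntervalIntegrable (fun z => (1 - ν) * f y * φB z - φA z)
      MeasureTheory.volume 0 1 := ((hφBint.const_mul _).sub hφAint)
  have hmono : (∫ z in (0:ℝ)..1, ((1 - ν) * f y * φB z - φA z)) ≤ ∫ z in (0:ℝ)..1, R z :=
    intervalIntegral.integral_mono_on zero_le_one hLint hRint hpt
  have hLval : (∫ z in (0:ℝ)..1, ((1 - ν) * f y * φB z - φA z))
      = (1 - ν) * f y * ((1:ℝ)/4) - (A 1 - A 0) := by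
    rw [intervalIntegral.integral_sub (hφBint.const_mul _) hφAint,
      intervalIntegral.integral_const_mul, hFTCB, hFTCA]
  -- endgame
  have hw1 : w 1 = (2:ℝ)⁻¹ • (x + u) := by rw [hw]; push_cast; module
  have hw0 : w 0 = u := by rw [hw]; module
  have hA1 : A 1 = f ((2:ℝ)⁻¹ • (x + u)) := by
    rw [hA]
    simp only [hF]
    rw [hw1]
    norm_num
  have hA0 : A 0 = f u * (4:ℝ)⁻¹ := by
    rw [hA]
    simp only [hF]
    rw [hw0]
    norm_num
  have hfu : 0 ≤ f u := hnonneg u (hKX hu)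
  rw [hinner]
  rw [hLval, hA1, hA0] at hmono
  have e1 : (1 - ν) * f y * ((1:ℝ)/4) = ((1 - ν)/4) * f y := by ring
  rw [e1] at hmono
  have e2 : 0 ≤ f u * (4:ℝ)⁻¹ := by positivity
  linarith
end
end

section
/- Let d ≥ 1 and let f : ℝ^d → ℝ be differentiable on X = [0,1]^d with continuous gradient ∇f that is β-Lipschitz on X, i.e. ‖∇f(x) − ∇f(y)‖ ≤ β‖x − y‖ for all x, y ∈ X. Define g : X → ℝ^d by g(x) = ∫_0^1 e^{z−1} · ∇f(z x) dz. Then g is (β/e)-Lipschitz on X: ‖g(x) − g(y)‖ ≤ (β/e)‖x − y‖ for all x, y ∈ X. -/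
/-!
Both `g x` and `g y` are averages of `f'` against the weight `e^{z-1}`, taken along the segments
`z ↦ z x` and `z ↦ z y`. At parameter `z` the two sample points are `z ‖x - y‖` apart, so the
Lipschitz bound on `f'` gives `‖g x - g y‖ ≤ β ‖x - y‖ ∫₀¹ z e^{z-1} dz`, and `∫₀¹ z e^{z-1} dz = 1/e`.
-/

open MeasureTheory Finset

noncomputable section

lemma smul_mem_cube {d : ℕ} {x : EuclideanSpace ℝ (Fin d)} (hx : x ∈ cube d)
    {z : ℝ} (hz : z ∈ Set.Icc (0 : ℝ) 1) : z • x ∈ cube d := fun i =>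
  ⟨mul_nonneg hz.1 (hx i).1, mul_le_one₀ hz.2 (hx i).1 (hx i).2⟩

lemma norm_intervalIntegral_smul_comp_smul_sub_le
    {E G : Type*} [NormedAddCommGroup E] [NormedSpace ℝ E]
    [NormedAddCommGroup G] [NormedSpace ℝ G]
    {F : E → G} {s : Set E} {w : ℝ → ℝ} {L : ℝ}
    (hs : ∀ x ∈ s, ∀ z ∈ Set.Icc (0 : ℝ) 1, z • x ∈ s)
    (hF : ∀ x ∈ s, ∀ y ∈ s, ‖F x - F y‖ ≤ L * ‖x - y‖)
    (hw : Continuous w) (hw_nonneg : ∀ z ∈ Set.Icc (0 : ℝ) 1, 0 ≤ w z)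
    {x y : E} (hx : x ∈ s) (hy : y ∈ s) :
    ‖(∫ z in (0 : ℝ)..1, w z • F (z • x)) - ∫ z in (0 : ℝ)..1, w z • F (z • y)‖ ≤
      L * (∫ z in (0 : ℝ)..1, z * w z) * ‖x - y‖ := by
  have hFc : ContinuousOn F s :=
    (LipschitzOnWith.of_dist_le' (by simpa only [dist_eq_norm] using hF)).continuousOn
  have hint : ∀ v ∈ s, IntervalIntegrable (fun z => w z • F (z • v)) volume 0 1 := by
    intro v hv
    refine ContinuousOn.intervalIntegrable ?_
    rw [Set.uIcc_of_le zero_le_one]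
    exact hw.continuousOn.smul (hFc.comp (by fun_prop) fun z hz => hs v hv z hz)
  have hpointwise : ∀ z ∈ Set.Icc (0 : ℝ) 1,
      ‖w z • F (z • x) - w z • F (z • y)‖ ≤ L * ‖x - y‖ * (z * w z) := by
    intro z hz
    calc ‖w z • F (z • x) - w z • F (z • y)‖
        = w z * ‖F (z • x) - F (z • y)‖ := by
          rw [← smul_sub, norm_smul, Real.norm_of_nonneg (hw_nonneg z hz)]
      _ ≤ w z * (L * (z * ‖x - y‖)) := by
          gcongr
          · exact hw_nonneg z hz
          · have hscale : ‖z • x - z • y‖ = z * ‖x - y‖ := by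
              rw [← smul_sub, norm_smul, Real.norm_of_nonneg hz.1]
            exact hscale ▸ hF _ (hs x hx z hz) _ (hs y hy z hz)
      _ = L * ‖x - y‖ * (z * w z) := by ring
  calc ‖(∫ z in (0 : ℝ)..1, w z • F (z • x)) - ∫ z in (0 : ℝ)..1, w z • F (z • y)‖
      = ‖∫ z in (0 : ℝ)..1, w z • F (z • x) - w z • F (z • y)‖ := by
        rw [intervalIntegral.integral_sub (hint x hx) (hint y hy)]
    _ ≤ ∫ z in (0 : ℝ)..1, ‖w z • F (z • x) - w z • F (z • y)‖ :=
        intervalIntegral.norm_integral_le_integral_norm zero_le_one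
    _ ≤ ∫ z in (0 : ℝ)..1, L * ‖x - y‖ * (z * w z) :=
        intervalIntegral.integral_mono_on zero_le_one ((hint x hx).sub (hint y hy)).norm
          ((by fun_prop : Continuous fun z => L * ‖x - y‖ * (z * w z)).intervalIntegrable 0 1)
          hpointwise
    _ = L * (∫ z in (0 : ℝ)..1, z * w z) * ‖x - y‖ := by
        rw [intervalIntegral.integral_const_mul]; ring

lemma integral_mul_exp_sub_one : ∫ z in (0 : ℝ)..1, z * Real.exp (z - 1) = Real.exp (-1) := by
  have hderiv : ∀ z ∈ Set.uIcc (0 : ℝ) 1,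
      HasDerivAt (fun z => (z - 1) * Real.exp (z - 1)) (z * Real.exp (z - 1)) z := by
    intro z _
    have hlin : HasDerivAt (fun z : ℝ => z - 1) 1 z := (hasDerivAt_id z).sub_const 1
    exact (hlin.mul hlin.exp).congr_deriv (by ring)
  rw [intervalIntegral.integral_eq_sub_of_hasDerivAt hderiv
    ((by fun_prop : Continuous fun z => z * Real.exp (z - 1)).intervalIntegrable 0 1)]
  norm_num

theorem boosting_monotone_gradient_lipschitz_general
    (d : ℕ)
    (β : ℝ)
    (f' : EuclideanSpace ℝ (Fin d) → EuclideanSpace ℝ (Fin d))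
    (hlip : ∀ x ∈ cube d, ∀ y ∈ cube d, ‖f' x - f' y‖ ≤ β * ‖x - y‖)
    (g : EuclideanSpace ℝ (Fin d) → EuclideanSpace ℝ (Fin d))
    (hg : ∀ x ∈ cube d, g x = ∫ z in (0:ℝ)..1, Real.exp (z - 1) • f' (z • x)) :
    ∀ x ∈ cube d, ∀ y ∈ cube d, ‖g x - g y‖ ≤ (β / Real.exp 1) * ‖x - y‖ := by
  intro x hx y hy
  rw [hg x hx, hg y hy]
  calc _ ≤ β * (∫ z in (0 : ℝ)..1, z * Real.exp (z - 1)) * ‖x - y‖ :=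
        norm_intervalIntegral_smul_comp_smul_sub_le (fun _ hv _ hz => smul_mem_cube hv hz) hlip
          (by fun_prop) (fun z _ => (Real.exp_pos (z - 1)).le) hx hy
    _ = β / Real.exp 1 * ‖x - y‖ := by
        rw [integral_mul_exp_sub_one, Real.exp_neg]; ring

/-- Theorem 9 of Zhang et al., smoothness of the monotone boosted
auxiliary function: if `∇f` is `β`-Lipschitz on `[0,1]^d`, then
`g x = ∫_0^1 e^{z-1} ∇f(z x) dz` is `(β/e)`-Lipschitz on `[0,1]^d`. -/
theorem boosting_monotone_gradient_lipschitz
    (d : ℕ) (hd : 1 ≤ d)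
    (β : ℝ)
    (f : EuclideanSpace ℝ (Fin d) → ℝ)
    (f' : EuclideanSpace ℝ (Fin d) → EuclideanSpace ℝ (Fin d))
    (hgrad : ∀ x ∈ cube d, HasGradientWithinAt f (f' x) (cube d) x)
    (hcont : ContinuousOn f' (cube d))
    (hlip : ∀ x ∈ cube d, ∀ y ∈ cube d, ‖f' x - f' y‖ ≤ β * ‖x - y‖)
    (g : EuclideanSpace ℝ (Fin d) → EuclideanSpace ℝ (Fin d))
    (hg : ∀ x ∈ cube d, g x = ∫ z in (0:ℝ)..1, Real.exp (z - 1) • f' (z • x)) :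
    ∀ x ∈ cube d, ∀ y ∈ cube d, ‖g x - g y‖ ≤ (β / Real.exp 1) * ‖x - y‖ :=
  boosting_monotone_gradient_lipschitz_general d β f' hlip g hg
end
end
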